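/- Key inequality in the self-adjointness criterion: under the hypotheses of the previous criterion, any φ ∈ D(T*) with T*φ = iφ satisfies Σ_{v ∈ S_n} |φ(v)|² ≤ κ Σ_{v ∉ S_n} |φ(v)|² for every n, and hence φ = 0. -/

import Mathlib

/-!
At `v ∈ F` split `T*φ = iφ` as `i φ v = ∑_{u ∈ F} w v u φ u + t v`, where `t v` collects the
neighbours of `v` outside `F`. Pairing with `φ` over `F` and taking imaginary parts kills the
Hermitian part, so Cauchy–Schwarz gives `∑_F |φ|² ≤ ∑_F |t|²`. A second Cauchy–Schwarz bounds
`|t v|²` by `κ` times the mass of `φ` on the outer neighbours of `v`. In a tree a vertex outside the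
connected set `F` has at most one neighbour in `F`, so summing over `v ∈ F` gives
`κ ∑_{Fᶜ} |φ|²`. Along the exhaustion these tails tend to `0`.
-/

open Filter Topology ComplexConjugate

namespace SimpleGraph

variable {V : Type*} {G : SimpleGraph V}

theorem IsAcyclic.subsingleton_neighborSet_inter (hG : G.IsAcyclic) {s : Set V}
    (hs : (G.induce s).Connected) {u : V} (hu : u ∉ s) :
    (G.neighborSet u ∩ s).Subsingleton := by
  classical
  rintro v₁ ⟨hv₁u : G.Adj u v₁, hv₁⟩ v₂ ⟨hv₂u : G.Adj u v₂, hv₂⟩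
  by_contra hne
  obtain ⟨p⟩ := hs.preconnected ⟨v₁, hv₁⟩ ⟨v₂, hv₂⟩
  let inside : G.Path v₁ v₂ := (p.map (Embedding.induce s).toHom).toPath
  have hinside : ∀ x ∈ inside.1.support, x ∈ s := by
    intro x hx
    obtain ⟨y, -, rfl⟩ := List.mem_map.mp
      (Walk.support_map _ p ▸ Walk.support_toPath_subset_support _ hx)
    exact y.2
  let around : G.Path v₁ v₂ := ⟨.cons hv₁u.symm (.cons hv₂u .nil), by
    simp [Walk.cons_isPath_iff, hne, hv₁u.ne', hv₂u.ne]⟩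
  have hu_around : u ∈ around.1.support := by simp [around]
  exact hu (hinside u ((hG.subsingleton_path v₁ v₂).elim around inside ▸ hu_around))

theorem IsAcyclic.card_filter_adj_le_one [DecidableRel G.Adj] (hG : G.IsAcyclic) {F : Finset V}
    (hF : (G.induce (F : Set V)).Connected) {u : V} (hu : u ∉ F) :
    (F.filter (G.Adj · u)).card ≤ 1 :=
  Finset.card_le_one.mpr fun v₁ hv₁ v₂ hv₂ => by
    simp only [Finset.mem_filter] at hv₁ hv₂
    exact hG.subsingleton_neighborSet_inter hF (by simpa using hu)
      ⟨hv₁.2.symm, hv₁.1⟩ ⟨hv₂.2.symm, hv₂.1⟩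

theorem IsAcyclic.sum_tsum_compl_ite_adj_le [DecidableRel G.Adj] (hG : G.IsAcyclic)
    {F : Finset V} (hF : (G.induce (F : Set V)).Connected) {f : V → ℝ} (hf : ∀ u, 0 ≤ f u)
    (hsum : Summable f) :
    ∑ v ∈ F, ∑' u : {x // x ∉ F}, (if G.Adj v u then f u else 0) ≤
      ∑' u : {x // x ∉ F}, f u := by
  have hsum' : Summable fun u : {x // x ∉ F} => f u := hsum.subtype _
  have hsum_adj (v : V) : Summable fun u : {x // x ∉ F} => if G.Adj v u then f u else 0 :=
    hsum'.of_nonneg_of_le (fun u => by split_ifs <;> simp [hf u])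
      fun u => by split_ifs <;> simp [hf u]
  rw [← Summable.tsum_finsetSum fun v _ => hsum_adj v]
  refine Summable.tsum_le_tsum (fun u => ?_) (summable_sum fun v _ => hsum_adj v) hsum'
  rw [← Finset.sum_filter, Finset.sum_const, nsmul_eq_mul]
  exact mul_le_of_le_one_left (hf u) (by exact_mod_cast hG.card_filter_adj_le_one hF u.2)

end SimpleGraph

theorem norm_tsum_mul_sq_le {ι R : Type*} [NonUnitalSeminormedRing R] {a b : ι → R}
    (ha : Summable fun i => ‖a i‖ ^ 2) (hb : Summable fun i => ‖b i‖ ^ 2) :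
    ‖∑' i, a i * b i‖ ^ 2 ≤ (∑' i, ‖a i‖ ^ 2) * ∑' i, ‖b i‖ ^ 2 := by
  have ha' : Summable fun i => ‖a i‖ ^ (2 : ℝ) := by simpa only [Real.rpow_two] using ha
  have hb' : Summable fun i => ‖b i‖ ^ (2 : ℝ) := by simpa only [Real.rpow_two] using hb
  obtain ⟨hsum, hholder⟩ := Real.summable_and_inner_le_Lp_mul_Lq_tsum_of_nonneg
    Real.HolderConjugate.two_two (fun i => norm_nonneg (a i)) (fun i => norm_nonneg (b i)) ha' hb'
  simp only [Real.rpow_two] at hholder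
  rw [← Real.sqrt_eq_rpow, ← Real.sqrt_eq_rpow] at hholder
  have hnorm : ‖∑' i, a i * b i‖ ≤ ∑' i, ‖a i‖ * ‖b i‖ :=
    (norm_tsum_le_tsum_norm (hsum.of_nonneg_of_le (fun _ => norm_nonneg _)
      fun i => norm_mul_le _ _)).trans
      (Summable.tsum_le_tsum (fun i => norm_mul_le _ _) (hsum.of_nonneg_of_le
        (fun _ => norm_nonneg _) fun i => norm_mul_le _ _) hsum)
  calc ‖∑' i, a i * b i‖ ^ 2 ≤ (√(∑' i, ‖a i‖ ^ 2) * √(∑' i, ‖b i‖ ^ 2)) ^ 2 := by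
        gcongr; exact hnorm.trans hholder
    _ = (∑' i, ‖a i‖ ^ 2) * ∑' i, ‖b i‖ ^ 2 := by
        rw [mul_pow, Real.sq_sqrt (tsum_nonneg fun _ => by positivity),
          Real.sq_sqrt (tsum_nonneg fun _ => by positivity)]

theorem Finset.tsum_ite_mem_eq_tsum_compl {α M : Type*} [DecidableEq α] [AddCommMonoid M]
    [TopologicalSpace M] (s : Finset α) (f : α → M) :
    ∑' x, (if x ∈ s then 0 else f x) = ∑' x : {x // x ∉ s}, f x := by
  refine Eq.trans ?_ (_root_.tsum_subtype ((s : Set α)ᶜ) f).symm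
  congr! 2 with x
  simp [Set.indicator_apply, ite_not]

theorem Complex.im_sum_sum_conj_mul_mul_eq_zero {V : Type*} (F : Finset V) {w : V → V → ℂ}
    (hw : ∀ u v, w u v = conj (w v u)) (φ : V → ℂ) :
    (∑ v ∈ F, ∑ u ∈ F, conj (φ v) * (w v u * φ u)).im = 0 := by
  refine Complex.conj_eq_iff_im.mp ?_
  simp only [map_sum, map_mul, Complex.conj_conj]
  rw [Finset.sum_comm]
  refine Finset.sum_congr rfl fun v _ => Finset.sum_congr rfl fun u _ => ?_
  rw [← hw]
  ring

theorem sum_norm_sq_le_sum_norm_sq_of_I_mul_eq {V : Type*} (F : Finset V) {w : V → V → ℂ}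
    (hw : ∀ u v, w u v = conj (w v u)) {φ t : V → ℂ}
    (h : ∀ v ∈ F, Complex.I * φ v = ∑ u ∈ F, w v u * φ u + t v) :
    ∑ v ∈ F, ‖φ v‖ ^ 2 ≤ ∑ v ∈ F, ‖t v‖ ^ 2 := by
  set B := ∑ v ∈ F, conj (φ v) * t v
  have hgreen : Complex.I * ((∑ v ∈ F, ‖φ v‖ ^ 2 : ℝ) : ℂ) =
      ∑ v ∈ F, ∑ u ∈ F, conj (φ v) * (w v u * φ u) + B := by
    rw [← Finset.sum_add_distrib, Complex.ofReal_sum, Finset.mul_sum]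
    refine Finset.sum_congr rfl fun v hv => ?_
    rw [← Finset.mul_sum, ← mul_add, ← h v hv, Complex.ofReal_pow, ← Complex.conj_mul']
    ring
  have hre : ∑ v ∈ F, ‖φ v‖ ^ 2 = B.im := by
    have := congrArg Complex.im hgreen
    rwa [Complex.add_im, Complex.im_sum_sum_conj_mul_mul_eq_zero F hw φ, zero_add,
      Complex.I_mul_im, Complex.ofReal_re] at this
  have hB : B.im ≤ ∑ v ∈ F, ‖φ v‖ * ‖t v‖ :=
    (Complex.im_le_norm B).trans <| (norm_sum_le _ _).trans_eq <|
      Finset.sum_congr rfl fun v _ => by rw [norm_mul, Complex.norm_conj]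
  have hcs := Finset.sum_mul_sq_le_sq_mul_sq F (fun v => ‖φ v‖) (fun v => ‖t v‖)
  have hφ : 0 ≤ ∑ v ∈ F, ‖φ v‖ ^ 2 := by positivity
  have ht : 0 ≤ ∑ v ∈ F, ‖t v‖ ^ 2 := by positivity
  nlinarith

theorem sum_norm_sq_le_mul_tsum_compl {V : Type*} {G : SimpleGraph V} (hG : G.IsAcyclic)
    {w : V → V → ℂ} (hherm : ∀ u v, w u v = conj (w v u)) (hskel : ∀ u v, w u v ≠ 0 ↔ G.Adj u v)
    (hrow : ∀ v, Summable fun u => ‖w v u‖ ^ 2) {κ : ℝ} (hκ : 0 ≤ κ) {F : Finset V}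
    (hF : (G.induce (F : Set V)).Connected)
    (hbdry : ∀ v ∈ F, ∑' u : {x // x ∉ F}, ‖w v u‖ ^ 2 ≤ κ)
    {φ : V → ℂ} (hφ : Summable fun v => ‖φ v‖ ^ 2)
    (hdef : ∀ v, HasSum (fun u => w v u * φ u) (Complex.I * φ v)) :
    ∑ v ∈ F, ‖φ v‖ ^ 2 ≤ κ * ∑' u : {x // x ∉ F}, ‖φ u‖ ^ 2 := by
  classical
  set t : V → ℂ := fun v => ∑' u : {x // x ∉ F}, w v u * φ u
  have hsplit (v : V) : Complex.I * φ v = ∑ u ∈ F, w v u * φ u + t v :=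
    ((hdef v).summable.sum_add_tsum_subtype_compl F).trans (hdef v).tsum_eq |>.symm
  have hboundary (v : V) (hv : v ∈ F) :
      ‖t v‖ ^ 2 ≤ κ * ∑' u : {x // x ∉ F}, if G.Adj v u then ‖φ u‖ ^ 2 else 0 := by
    have hcut (u : V) : w v u * φ u = w v u * if G.Adj v u then φ u else 0 := by
      by_cases hvu : G.Adj v u
      · rw [if_pos hvu]
      · rw [if_neg hvu, not_not.mp (mt (hskel v u).mp hvu), zero_mul, zero_mul]
    have hnorm_cut (u : V) : ‖if G.Adj v u then φ u else 0‖ ^ 2 =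
        if G.Adj v u then ‖φ u‖ ^ 2 else 0 := by
      split_ifs <;> simp
    have hcs := norm_tsum_mul_sq_le ((hrow v).subtype (· ∉ F))
      (hφ.subtype (· ∉ F) |>.of_nonneg_of_le (fun _ => by positivity)
        fun u => by rw [hnorm_cut]; split_ifs <;> simp)
      (a := fun u : {x // x ∉ F} => w v u) (b := fun u => if G.Adj v u then φ u else 0)
    calc ‖t v‖ ^ 2 = ‖∑' u : {x // x ∉ F}, w v u * if G.Adj v u then φ u else 0‖ ^ 2 := by
          simp only [t, hcut]
      _ ≤ κ * ∑' u : {x // x ∉ F}, ‖if G.Adj v u then φ u else 0‖ ^ 2 :=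
          hcs.trans (mul_le_mul_of_nonneg_right (hbdry v hv) (tsum_nonneg fun _ => by positivity))
      _ = κ * ∑' u : {x // x ∉ F}, if G.Adj v u then ‖φ u‖ ^ 2 else 0 := by
          simp only [hnorm_cut]
  calc ∑ v ∈ F, ‖φ v‖ ^ 2 ≤ ∑ v ∈ F, ‖t v‖ ^ 2 :=
        sum_norm_sq_le_sum_norm_sq_of_I_mul_eq F hherm fun v _ => hsplit v
    _ ≤ ∑ v ∈ F, κ * ∑' u : {x // x ∉ F}, if G.Adj v u then ‖φ u‖ ^ 2 else 0 :=
        Finset.sum_le_sum hboundary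
    _ ≤ κ * ∑' u : {x // x ∉ F}, ‖φ u‖ ^ 2 := by
        rw [← Finset.mul_sum]
        exact mul_le_mul_of_nonneg_left
          (hG.sum_tsum_compl_ite_adj_le hF (fun _ => by positivity) hφ) hκ

theorem eq_zero_of_sum_le_mul_tsum_compl {V : Type*} {f : V → ℝ} (hf : ∀ v, 0 ≤ f v)
    {S : ℕ → Finset V} (hS : Monotone S) (hexh : ∀ v, ∃ n, v ∈ S n) (κ : ℝ)
    (h : ∀ n, ∑ v ∈ S n, f v ≤ κ * ∑' u : {x // x ∉ S n}, f u) : f = 0 := by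
  have htail : Tendsto (fun n => κ * ∑' u : {x // x ∉ S n}, f u) atTop (𝓝 0) := by
    simpa using ((tendsto_tsum_compl_atTop_zero f).comp
      (tendsto_atTop_finset_of_monotone hS hexh)).const_mul κ
  funext v
  obtain ⟨n₀, hn₀⟩ := hexh v
  refine le_antisymm (ge_of_tendsto htail ?_) (hf v)
  filter_upwards [eventually_ge_atTop n₀] with n hn
  exact (Finset.single_le_sum (fun u _ => hf u) (hS hn hn₀)).trans (h n)

theorem stmt12_general {V : Type*} [DecidableEq V]
    (G : SimpleGraph V) (htree : G.IsTree)
    (w : V → V → ℂ)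
    (hherm : ∀ u v, w u v = starRingEnd ℂ (w v u))
    (hskel : ∀ u v, w u v ≠ 0 ↔ G.Adj u v)
    (hrow : ∀ v, Summable (fun u => ‖w v u‖ ^ 2))
    (κ : ℝ) (hκ : 0 < κ)
    (S : ℕ → Finset V)
    (hmono : ∀ n, S n ⊆ S (n + 1))
    (hexh : ∀ v, ∃ n, v ∈ S n)
    (hconn : ∀ n, (G.induce (↑(S n) : Set V)).Connected)
    (hbdry : ∀ n, ∀ v ∈ S n, ∑' u : V, (if u ∈ S n then 0 else ‖w v u‖ ^ 2) ≤ κ)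
    (φ : V → ℂ) (hφ : Summable (fun v => ‖φ v‖ ^ 2))
    (hdef : ∀ v, HasSum (fun u => w v u * φ u) (Complex.I * φ v)) :
    (∀ n, ∑ v ∈ S n, ‖φ v‖ ^ 2 ≤ κ * ∑' u : V, (if u ∈ S n then 0 else ‖φ u‖ ^ 2)) ∧
    φ = 0 := by
  simp only [Finset.tsum_ite_mem_eq_tsum_compl] at hbdry ⊢
  have hkey (n : ℕ) : ∑ v ∈ S n, ‖φ v‖ ^ 2 ≤ κ * ∑' u : {x // x ∉ S n}, ‖φ u‖ ^ 2 :=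
    sum_norm_sq_le_mul_tsum_compl htree.isAcyclic hherm hskel hrow hκ.le (hconn n) (hbdry n) hφ
      hdef
  refine ⟨hkey, funext fun v => ?_⟩
  have hφ_sq := eq_zero_of_sum_le_mul_tsum_compl (fun v => sq_nonneg ‖φ v‖)
    (monotone_nat_of_le_succ hmono) hexh κ hkey
  simpa using congrFun hφ_sq v

/-- **key inequality in the self-adjointness criterion.** Under the hypotheses
of the essential self-adjointness criterion on a tree, any `ℓ²` function `φ` with
`T* φ = i φ` satisfies `Σ_{v ∈ S n} |φ v|² ≤ κ Σ_{v ∉ S n} |φ v|²` for every `n`, and hence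
`φ = 0`. -/
theorem stmt12 {V : Type*} [Countable V] [DecidableEq V]
    (G : SimpleGraph V) (htree : G.IsTree)
    (w : V → V → ℂ)
    (hherm : ∀ u v, w u v = starRingEnd ℂ (w v u))
    (hskel : ∀ u v, w u v ≠ 0 ↔ G.Adj u v)
    (hrow : ∀ v, Summable (fun u => ‖w v u‖ ^ 2))
    (κ : ℝ) (hκ : 0 < κ)
    (S : ℕ → Finset V)
    (hmono : ∀ n, S n ⊆ S (n + 1))
    (hexh : ∀ v, ∃ n, v ∈ S n)
    (hconn : ∀ n, (G.induce (↑(S n) : Set V)).Connected)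
    (hbdry : ∀ n, ∀ v ∈ S n, ∑' u : V, (if u ∈ S n then 0 else ‖w v u‖ ^ 2) ≤ κ)
    (φ : V → ℂ) (hφ : Summable (fun v => ‖φ v‖ ^ 2))
    (hdef : ∀ v, HasSum (fun u => w v u * φ u) (Complex.I * φ v)) :
    (∀ n, ∑ v ∈ S n, ‖φ v‖ ^ 2 ≤ κ * ∑' u : V, (if u ∈ S n then 0 else ‖φ u‖ ^ 2)) ∧
    φ = 0 :=
  stmt12_general G htree w hherm hskel hrow κ hκ S hmono hexh hconn hbdry φ hφ hdef
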